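/- arXiv:1908.09376 — 6 statements merged into one kernel-verified Lean document; each statement's English description precedes it below -/
import Mathlib

section
/- Let n, m ≥ 3 and let τ ≤ 1/16. Suppose φ, ψ : {1,…,n} × {1,…,m} → ℝ are matrices such that every row and every column of φ and of ψ belongs to the class C_τ. If φ(i,j) − ψ(i,j) ∈ ℤ for all i, j (i.e. φ and ψ agree modulo 1 entrywise), and φ(i,j) = ψ(i,j) for all 1 ≤ i, j ≤ 3, then φ = ψ. (This is the content of the paper's Lemma 2.1: given mod(φ,1) and the recovered values φ(1:3,1:3), the recovered value at the intersection of each row and column is uniquely determined, so the row recovery and the column recovery agree.) -/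
/-- paper's Lemma 2.1: Let `n, m ≥ 3`, `τ ≤ 1/16`.
If all rows and columns of the `n × m` matrices `φ, ψ` (1-based indices)
belong to the class `C_τ` (third-order finite differences bounded in
absolute value by `τ`), `φ` and `ψ` agree modulo 1 entrywise, and
`φ = ψ` on the leading `3 × 3` block, then `φ = ψ`. -/
theorem matrix_recovery_unique
    (n m : ℕ) (hn : 3 ≤ n) (hm : 3 ≤ m)
    (τ : ℝ) (hτ : τ ≤ 1 / 16)
    (φ ψ : ℕ → ℕ → ℝ)
    (hφrow : ∀ i j, 1 ≤ i → i ≤ n → 4 ≤ j → j ≤ m →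
      |φ i j - 3 * φ i (j - 1) + 3 * φ i (j - 2) - φ i (j - 3)| < τ)
    (hφcol : ∀ i j, 4 ≤ i → i ≤ n → 1 ≤ j → j ≤ m →
      |φ i j - 3 * φ (i - 1) j + 3 * φ (i - 2) j - φ (i - 3) j| < τ)
    (hψrow : ∀ i j, 1 ≤ i → i ≤ n → 4 ≤ j → j ≤ m →
      |ψ i j - 3 * ψ i (j - 1) + 3 * ψ i (j - 2) - ψ i (j - 3)| < τ)
    (hψcol : ∀ i j, 4 ≤ i → i ≤ n → 1 ≤ j → j ≤ m →
      |ψ i j - 3 * ψ (i - 1) j + 3 * ψ (i - 2) j - ψ (i - 3) j| < τ)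
    (hmod : ∀ i j, 1 ≤ i → i ≤ n → 1 ≤ j → j ≤ m →
      ∃ k : ℤ, φ i j - ψ i j = (k : ℝ))
    (hinit : ∀ i j, 1 ≤ i → i ≤ 3 → 1 ≤ j → j ≤ 3 → φ i j = ψ i j) :
    ∀ i j, 1 ≤ i → i ≤ n → 1 ≤ j → j ≤ m → φ i j = ψ i j := by
 -- key: two reals each |·|<τ differing by an integer are equal (τ ≤ 1/16)
  have int_lem : ∀ a b : ℝ, |a| < τ → |b| < τ → (∃ k : ℤ, a - b = (k : ℝ)) → a = b := by
    rintro a b ha hb ⟨k, hk⟩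
    have h1 : |a - b| < 1 := by
      calc |a - b| ≤ |a| + |b| := abs_sub _ _
        _ < τ + τ := by linarith
        _ ≤ 1 := by linarith
    rw [hk] at h1
    have h2 : |k| < 1 := by exact_mod_cast (by rwa [← Int.cast_abs] at h1 : ((|k| : ℤ) : ℝ) < 1)
    have : k = 0 := by rwa [Int.abs_lt_one_iff] at h2
    have : a - b = 0 := by rw [hk, this]; norm_num
    linarith
  -- row extension
  have row : ∀ i, 1 ≤ i → i ≤ n → (∀ j, 1 ≤ j → j ≤ 3 → φ i j = ψ i j) →
      ∀ j, 1 ≤ j → j ≤ m → φ i j = ψ i j := by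
    intro i hi1 hin hbase j
    induction j using Nat.strong_induction_on with
    | _ j IH =>
      intro hj1 hjm
      by_cases hj3 : j ≤ 3
      · exact hbase j hj1 hj3
      · have hj4 : 4 ≤ j := by omega
        have hA := hφrow i j hi1 hin hj4 hjm
        have hB := hψrow i j hi1 hin hj4 hjm
        obtain ⟨k0, hk0⟩ := hmod i j hi1 hin hj1 hjm
        obtain ⟨k1, hk1⟩ := hmod i (j-1) hi1 hin (by omega) (by omega)
        obtain ⟨k2, hk2⟩ := hmod i (j-2) hi1 hin (by omega) (by omega)
        obtain ⟨k3, hk3⟩ := hmod i (j-3) hi1 hin (by omega) (by omega)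
        have heq := int_lem _ _ hA hB ⟨k0 - 3*k1 + 3*k2 - k3, by push_cast; linarith⟩
        have e1 := IH (j-1) (by omega) (by omega) (by omega)
        have e2 := IH (j-2) (by omega) (by omega) (by omega)
        have e3 := IH (j-3) (by omega) (by omega) (by omega)
        linarith
  intro i j hi1 hin hj1 hjm
  induction i using Nat.strong_induction_on with
  | _ i IH =>
    by_cases hi3 : i ≤ 3
    · exact row i hi1 hin (fun j' hj1' hj3' => hinit i j' hi1 hi3 hj1' hj3') j hj1 hjm
    · have hi4 : 4 ≤ i := by omega
      have hA := hφcol i j hi4 hin hj1 hjm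
      have hB := hψcol i j hi4 hin hj1 hjm
      obtain ⟨k0, hk0⟩ := hmod i j (by omega) hin hj1 hjm
      obtain ⟨k1, hk1⟩ := hmod (i-1) j (by omega) (by omega) hj1 hjm
      obtain ⟨k2, hk2⟩ := hmod (i-2) j (by omega) (by omega) hj1 hjm
      obtain ⟨k3, hk3⟩ := hmod (i-3) j (by omega) (by omega) hj1 hjm
      have heq := int_lem _ _ hA hB ⟨k0 - 3*k1 + 3*k2 - k3, by push_cast; linarith⟩
      have e1 := IH (i-1) (by omega) (by omega) (by omega)
      have e2 := IH (i-2) (by omega) (by omega) (by omega)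
      have e3 := IH (i-3) (by omega) (by omega) (by omega)
      linarith
end

section
/- Let τ ≤ 1/4. Let p₁ be a predecessor map on the row index set {0,…,n−1} and p₂ a predecessor map on the column index set {0,…,m−1}. Suppose φ, ψ : {0,…,n−1} × {0,…,m−1} → ℝ are matrices such that every row of φ and of ψ belongs to C_{τ,p₂} and every column of φ and of ψ belongs to C_{τ,p₁}. If φ(i,j) − ψ(i,j) ∈ ℤ for all i, j, and φ(0,0) = ψ(0,0), then φ = ψ. (This is the content of the paper's Lemma 2.2: the intersection of each recovered row and column in the multidimensional phase-matrix recovery shares the same value.) -/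
lemma key_step (τ : ℝ) (hτ : τ ≤ 1 / 4) (x y a b : ℝ)
    (h1 : |x - a| < τ) (h2 : |y - b| < τ) (hab : a = b)
    (hk : ∃ k : ℤ, x - y = (k : ℝ)) : x = y := by
  obtain ⟨k, hk⟩ := hk
  have : |x - y| < 1 := by
    have : x - y = (x - a) - (y - b) := by rw [hab]; ring
    rw [this]
    calc |(x - a) - (y - b)| ≤ |x - a| + |y - b| := abs_sub _ _
      _ < τ + τ := by linarith
      _ ≤ 1 := by linarith
  rw [hk] at this
  have hk1 : |k| < 1 := by exact_mod_cast this
  have : k = 0 := by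
    rcases abs_lt.mp hk1 with ⟨h1, h2⟩
    omega
  have : x - y = 0 := by rw [hk, this]; simp
  linarith

/-- paper's Lemma 2.2: Let `τ ≤ 1/4`, let `p₁` be a
predecessor map on the row indices `{0,…,n−1}` and `p₂` one on the
column indices `{0,…,m−1}`.  If every row of `φ, ψ` lies in
`C_{τ,p₂}` and every column lies in `C_{τ,p₁}`, `φ` and `ψ` agree
modulo 1 entrywise, and `φ(0,0) = ψ(0,0)`, then `φ = ψ`. -/
theorem matrix_recovery_unique_path
    (n m : ℕ) (τ : ℝ) (hτ : τ ≤ 1 / 4)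
    (p₁ p₂ : ℕ → ℕ)
    (hp₁ : ∀ i, i < n → i ≠ 0 → p₁ i < i)
    (hp₂ : ∀ j, j < m → j ≠ 0 → p₂ j < j)
    (φ ψ : ℕ → ℕ → ℝ)
    (hφrow : ∀ i j, i < n → j < m → j ≠ 0 → |φ i j - φ i (p₂ j)| < τ)
    (hφcol : ∀ i j, i < n → j < m → i ≠ 0 → |φ i j - φ (p₁ i) j| < τ)
    (hψrow : ∀ i j, i < n → j < m → j ≠ 0 → |ψ i j - ψ i (p₂ j)| < τ)
    (hψcol : ∀ i j, i < n → j < m → i ≠ 0 → |ψ i j - ψ (p₁ i) j| < τ)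
    (hmod : ∀ i j, i < n → j < m → ∃ k : ℤ, φ i j - ψ i j = (k : ℝ))
    (hinit : φ 0 0 = ψ 0 0) :
    ∀ i j, i < n → j < m → φ i j = ψ i j := by
  intro i
  induction i using Nat.strong_induction_on with
  | _ i ih =>
    intro j
    induction j using Nat.strong_induction_on with
    | _ j ihj =>
      intro hi hj
      rcases Nat.eq_zero_or_pos i with hi0 | hipos
      · subst hi0
        rcases Nat.eq_zero_or_pos j with hj0 | hjpos
        · subst hj0; exact hinit
        · have hjne : j ≠ 0 := Nat.pos_iff_ne_zero.mp hjpos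
          have hpj := hp₂ j hj hjne
          exact key_step τ hτ _ _ _ _ (hφrow 0 j hi hj hjne) (hψrow 0 j hi hj hjne)
            (ihj (p₂ j) hpj hi (hpj.trans hj)) (hmod 0 j hi hj)
      · have hine : i ≠ 0 := Nat.pos_iff_ne_zero.mp hipos
        have hpi := hp₁ i hi hine
        exact key_step τ hτ _ _ _ _ (hφcol i j hi hj hine) (hψcol i j hi hj hine)
          (ih (p₁ i) hpi j (hpi.trans hi) hj) (hmod i j hi hj)
end

section
/- Let n ≥ 3 and τ ≤ 1/2. If v, w ∈ ℝ^n both belong to the class C_τ, v(i) − w(i) ∈ ℤ for every i, and v(i) = w(i) for i = 1, 2, 3, then v = w. (Uniqueness of one-dimensional vector recovery from values modulo 1 given the first three entries, which underlies the correctness of the paper's Algorithm 2.) -/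
/-- Uniqueness of 1D vector recovery from values modulo 1
given the first three entries.  `n ≥ 3`, `τ ≤ 1/2`, `v, w ∈ C_τ`
(1-based indices), `v − w` integer-valued entrywise, `v = w` on the
first three entries; then `v = w`. -/
theorem vector_recovery_unique
    (n : ℕ) (hn : 3 ≤ n)
    (τ : ℝ) (hτ : τ ≤ 1 / 2)
    (v w : ℕ → ℝ)
    (hv : ∀ i, 4 ≤ i → i ≤ n →
      |v i - 3 * v (i - 1) + 3 * v (i - 2) - v (i - 3)| < τ)
    (hw : ∀ i, 4 ≤ i → i ≤ n →
      |w i - 3 * w (i - 1) + 3 * w (i - 2) - w (i - 3)| < τ)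
    (hmod : ∀ i, 1 ≤ i → i ≤ n → ∃ k : ℤ, v i - w i = (k : ℝ))
    (hinit : ∀ i, 1 ≤ i → i ≤ 3 → v i = w i) :
    ∀ i, 1 ≤ i → i ≤ n → v i = w i := by
  intro i
  induction i using Nat.strong_induction_on with
  | _ i ih =>
    intro hi1 hin
    by_cases h4 : i ≤ 3
    · exact hinit i hi1 h4
    · push_neg at h4
      have hi4 : 4 ≤ i := h4
      have h1 : v (i-1) = w (i-1) := ih (i-1) (by omega) (by omega) (by omega)
      have h2 : v (i-2) = w (i-2) := ih (i-2) (by omega) (by omega) (by omega)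
      have h3 : v (i-3) = w (i-3) := ih (i-3) (by omega) (by omega) (by omega)
      obtain ⟨k, hk⟩ := hmod i (by omega) hin
      have hv' := hv i hi4 hin
      have hw' := hw i hi4 hin
      have heq : v i - w i = (v i - 3*v (i-1) + 3*v (i-2) - v (i-3))
          - (w i - 3*w (i-1) + 3*w (i-2) - w (i-3)) := by
        rw [h1, h2, h3]; ring
      have habs : |(k:ℝ)| < 1 := by
        rw [← hk, heq]
        calc |(v i - 3*v (i-1) + 3*v (i-2) - v (i-3))
            - (w i - 3*w (i-1) + 3*w (i-2) - w (i-3))|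
            ≤ |v i - 3*v (i-1) + 3*v (i-2) - v (i-3)|
              + |w i - 3*w (i-1) + 3*w (i-2) - w (i-3)| := abs_sub _ _
          _ < 1 := by linarith
      have hk0 : k = 0 := by
        have h : |k| < 1 := by exact_mod_cast habs
        rw [abs_lt] at h; omega
      rw [hk0] at hk
      simp at hk
      linarith
end

section
/- Let τ ≤ 1/2 and let p be a predecessor map on {0,…,n−1}. If v, w ∈ ℝ^n both belong to C_{τ,p}, v(i) − w(i) ∈ ℤ for every i, and v(0) = w(0), then v = w. (Uniqueness of vector recovery along a recovery path from values modulo 1 given the root value, which underlies the correctness of the paper's Algorithm 3.) -/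
/-- Uniqueness of vector recovery along a recovery path.
`p` is a predecessor map on `{0,…,n−1}` (`p(i) < i` for `i ≠ 0`),
`v, w ∈ C_{τ,p}` with `τ ≤ 1/2`, `v − w` integer-valued, and
`v(0) = w(0)`; then `v = w`. -/
theorem vector_recovery_unique_path
    (n : ℕ) (τ : ℝ) (hτ : τ ≤ 1 / 2)
    (p : ℕ → ℕ) (hp : ∀ i, i < n → i ≠ 0 → p i < i)
    (v w : ℕ → ℝ)
    (hv : ∀ i, i < n → i ≠ 0 → |v i - v (p i)| < τ)
    (hw : ∀ i, i < n → i ≠ 0 → |w i - w (p i)| < τ)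
    (hmod : ∀ i, i < n → ∃ k : ℤ, v i - w i = (k : ℝ))
    (hinit : v 0 = w 0) :
    ∀ i, i < n → v i = w i := by
  intro i
  induction i using Nat.strong_induction_on with
  | _ i ih =>
    intro hin
    rcases eq_or_ne i 0 with rfl | hi0
    · exact hinit
    · have hpi := hp i hin hi0
      have hpeq : v (p i) = w (p i) := ih (p i) hpi (hpi.trans hin)
      obtain ⟨k, hk⟩ := hmod i hin
      have h1 := hv i hin hi0
      have h2 := hw i hin hi0
      have : |v i - w i| < 1 := by
        calc |v i - w i| = |(v i - v (p i)) - (w i - w (p i))| := by rw [hpeq]; ring_nf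
          _ ≤ |v i - v (p i)| + |w i - w (p i)| := abs_sub _ _
          _ < τ + τ := by linarith
          _ ≤ 1 := by linarith
      rw [hk] at this
      have hk0 : k = 0 := by
        have h' : |k| < 1 := by exact_mod_cast this
        have h2 := abs_lt.mp h'; omega
      have : v i - w i = 0 := by rw [hk, hk0]; norm_num
      linarith
end

section
/- Let n ≥ 3 and τ ≤ 1/2. Let w ∈ ℝ^n belong to the class C_τ and let u ∈ ℝ^n satisfy w(i) − u(i) ∈ ℤ for all i. Define v ∈ ℝ^n recursively by v(i) = w(i) for i = 1, 2, 3 and v(i) = u(i) − round(u(i) − 3v(i−1) + 3v(i−2) − v(i−3)) for 4 ≤ i ≤ n. Then v = w. (Correctness of the recovery recursion in the paper's Algorithm 2: applied to the observation u = mod(w,1) with the correct first three values, it reproduces the smooth vector w exactly.) -/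
/-! Once `v` agrees with `w` at the three previous indices, the rounded quantity differs from the
third difference of `w` by the integer `w i - u i`; since that third difference is smaller than
`1/2` in absolute value, rounding returns exactly `u i - w i`, so `v i = w i`. -/

lemma round_sub_eq_of_abs_sub_lt_half {x y c : ℝ} {k : ℤ} (hk : x - y = k)
    (hx : |x - c| < 1 / 2) : round (y - c) = y - x := by
  have hzero : round (x - c) = 0 :=
    round_eq_zero_iff.mpr ⟨by linarith [(abs_lt.mp hx).1], (abs_lt.mp hx).2⟩
  have hyc : y - c = (x - c) - k := by linarith
  rw [hyc, round_sub_intCast, hzero]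
  push_cast
  linarith

theorem recovery_recursion_correct_general
    (n : ℕ)
    (τ : ℝ) (hτ : τ ≤ 1 / 2)
    (w u v : ℕ → ℝ)
    (hw : ∀ i, 4 ≤ i → i ≤ n →
      |w i - 3 * w (i - 1) + 3 * w (i - 2) - w (i - 3)| < τ)
    (hmod : ∀ i, 1 ≤ i → i ≤ n → ∃ k : ℤ, w i - u i = (k : ℝ))
    (hinit : ∀ i, 1 ≤ i → i ≤ 3 → v i = w i)
    (hrec : ∀ i, 4 ≤ i → i ≤ n →
      v i = u i - round (u i - 3 * v (i - 1) + 3 * v (i - 2) - v (i - 3))) :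
    ∀ i, 1 ≤ i → i ≤ n → v i = w i := by
  intro i
  induction i using Nat.strong_induction_on with
  | _ i ih =>
    intro hi1 hin
    rcases le_or_gt i 3 with hi3 | hi4
    · exact hinit i hi1 hi3
    have e1 : v (i - 1) = w (i - 1) := ih (i - 1) (by omega) (by omega) (by omega)
    have e2 : v (i - 2) = w (i - 2) := ih (i - 2) (by omega) (by omega) (by omega)
    have e3 : v (i - 3) = w (i - 3) := ih (i - 3) (by omega) (by omega) (by omega)
    set c := 3 * w (i - 1) - 3 * w (i - 2) + w (i - 3)
    have hsmall : |w i - c| < 1 / 2 := by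
      have := hw i hi4 hin
      rw [show w i - c = w i - 3 * w (i - 1) + 3 * w (i - 2) - w (i - 3) by ring]
      linarith
    obtain ⟨k, hk⟩ := hmod i hi1 hin
    have hround := round_sub_eq_of_abs_sub_lt_half hk hsmall
    rw [hrec i hi4 hin, e1, e2, e3,
      show u i - 3 * w (i - 1) + 3 * w (i - 2) - w (i - 3) = u i - c by ring, hround]
    ring

/-- Correctness of the recovery recursion of the paper's
Algorithm 2.  If `w ∈ C_τ` with `τ ≤ 1/2`, `u` agrees with `w`
modulo 1, and `v` is defined by `v(i) = w(i)` for `i = 1,2,3` and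
`v(i) = u(i) − round(u(i) − 3v(i−1) + 3v(i−2) − v(i−3))` for
`4 ≤ i ≤ n`, then `v = w`. -/
theorem recovery_recursion_correct
    (n : ℕ) (hn : 3 ≤ n)
    (τ : ℝ) (hτ : τ ≤ 1 / 2)
    (w u v : ℕ → ℝ)
    (hw : ∀ i, 4 ≤ i → i ≤ n →
      |w i - 3 * w (i - 1) + 3 * w (i - 2) - w (i - 3)| < τ)
    (hmod : ∀ i, 1 ≤ i → i ≤ n → ∃ k : ℤ, w i - u i = (k : ℝ))
    (hinit : ∀ i, 1 ≤ i → i ≤ 3 → v i = w i)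
    (hrec : ∀ i, 4 ≤ i → i ≤ n →
      v i = u i - round (u i - 3 * v (i - 1) + 3 * v (i - 2) - v (i - 3))) :
    ∀ i, 1 ≤ i → i ≤ n → v i = w i :=
  recovery_recursion_correct_general n τ hτ w u v hw hmod hinit hrec
end

section
/- Let τ ≤ 1/2 and let p be a predecessor map on {0,…,n−1}. Let w ∈ ℝ^n belong to C_{τ,p} and let u ∈ ℝ^n satisfy w(i) − u(i) ∈ ℤ for all i. Define v ∈ ℝ^n recursively (in increasing order of index, which is well defined since p(i) < i) by v(0) = w(0) and v(i) = u(i) − round(u(i) − v(p(i))) for i ≠ 0. Then v = w. (Correctness of the recovery recursion along a recovery path in the paper's Algorithm 3: applied to the observation u = mod(w,1) with the correct root value, it reproduces the smooth vector w exactly.) -/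
/-!
Each step of the recursion recovers the integer part exactly: if `u ≡ x (mod 1)` and the
already recovered neighbour `y` satisfies `|x - y| < 1/2`, then `u - y` differs from the
integer `u - x` by less than `1/2`, so rounding it returns `u - x`. Since `p(i) < i`, induction
along the predecessor tree propagates `v = w` from the root.
-/

theorem induction_of_pred_lt {n : ℕ} {p : ℕ → ℕ} (hp : ∀ i, i < n → i ≠ 0 → p i < i)
    {P : ℕ → Prop} (h0 : P 0) (hstep : ∀ i, i < n → i ≠ 0 → P (p i) → P i) :
    ∀ i, i < n → P i := by
  intro i
  induction i using Nat.strong_induction_on with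
  | _ i ih =>
    intro hi
    rcases eq_or_ne i 0 with rfl | hi0
    · exact h0
    · have hpi := hp i hi hi0
      exact hstep i hi hi0 (ih (p i) hpi (hpi.trans hi))

theorem sub_round_sub_eq_of_abs_sub_lt {x y u : ℝ} (hmod : ∃ k : ℤ, x - u = k)
    (hxy : |x - y| < 1 / 2) : u - round (u - y) = x := by
  obtain ⟨k, hk⟩ := hmod
  have hround : round (u - y) = -k := by
    rw [show u - y = (x - y) + ((-k : ℤ) : ℝ) by push_cast; linarith, round_add_intCast,
      round_eq_zero_iff.2, zero_add]
    obtain ⟨hlo, hhi⟩ := abs_lt.1 hxy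
    exact ⟨by linarith, hhi⟩
  rw [hround]
  push_cast
  linarith

/-- Correctness of the recovery recursion along a recovery
path (the paper's Algorithm 3).  If `w ∈ C_{τ,p}` with `τ ≤ 1/2`,
`u` agrees with `w` modulo 1, and `v` is defined by `v(0) = w(0)` and
`v(i) = u(i) − round(u(i) − v(p(i)))` for `i ≠ 0`, then `v = w`. -/
theorem recovery_recursion_correct_path
    (n : ℕ) (τ : ℝ) (hτ : τ ≤ 1 / 2)
    (p : ℕ → ℕ) (hp : ∀ i, i < n → i ≠ 0 → p i < i)
    (w u v : ℕ → ℝ)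
    (hw : ∀ i, i < n → i ≠ 0 → |w i - w (p i)| < τ)
    (hmod : ∀ i, i < n → ∃ k : ℤ, w i - u i = (k : ℝ))
    (hinit : v 0 = w 0)
    (hrec : ∀ i, i < n → i ≠ 0 → v i = u i - round (u i - v (p i))) :
    ∀ i, i < n → v i = w i := by
  refine induction_of_pred_lt hp hinit fun i hi hi0 hvp => ?_
  rw [hrec i hi hi0, hvp]
  exact sub_round_sub_eq_of_abs_sub_lt (hmod i hi) ((hw i hi hi0).trans_le hτ)
end
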